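/- Let β > 0 and let K ⊆ V be the union of all minimal strongly connected components C with ρ(A_C) = e^β. If h, h' : V → ℝ both have nonnegative entries, satisfy A·h = e^β·h and A·h' = e^β·h', and agree on K (h|_K = h'|_K), then h = h'. -/

import Mathlib

open Filter Topology ENNReal

noncomputable section

/-- Every subset of a finite type is a `Fintype` (classically). -/
noncomputable def setFintypeAux {V : Type*} [Fintype V] (S : Set V) : Fintype S :=
  S.toFinite.fintype

attribute [local instance] setFintypeAux

variable {V : Type*} [Fintype V] [DecidableEq V]

/-- `v ⟶* w` : some power of `A` has a positive `(v,w)` entry. -/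
def Reaches (A : Matrix V V ℝ) (v w : V) : Prop := ∃ k : ℕ, 0 < (A ^ k) v w

/-- The spectral radius of a real matrix: the largest absolute value of a complex
eigenvalue. -/
def specRad (A : Matrix V V ℝ) : ℝ :=
  sSup {r : ℝ | ∃ μ ∈ spectrum ℂ (A.map fun t : ℝ => (t : ℂ)), r = ‖μ‖}

/-- The `S × S` submatrix of `A`. -/
def subMat (A : Matrix V V ℝ) (S : Set V) : Matrix S S ℝ :=
  A.submatrix Subtype.val Subtype.val

/-- `ρ(A_S)`. -/
def specRadSub (A : Matrix V V ℝ) (S : Set V) : ℝ := specRad (subMat A S)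

/-- The strongly connected component of `v`. -/
def sccOf (A : Matrix V V ℝ) (v : V) : Set V := {u | Reaches A v u ∧ Reaches A u v}

/-- `C` is a strongly connected component. -/
def IsSCC (A : Matrix V V ℝ) (C : Set V) : Prop := ∃ v : V, C = sccOf A v

/-- `C` is a minimal strongly connected component: every other component `C'` that reaches `C`
has strictly smaller spectral radius. -/
def IsMinSCC (A : Matrix V V ℝ) (C : Set V) : Prop :=
  IsSCC A C ∧ ∀ C' : Set V, IsSCC A C' → C' ≠ C →
    (∃ v' ∈ C', ∃ u ∈ C, Reaches A v' u) → specRadSub A C' < specRadSub A C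

/-- `Z_{w,v}(x) := Σ_{k=0}^∞ x^k (A^k)_{w,v} ∈ [0,∞]`. -/
def Zfun (A : Matrix V V ℝ) (w v : V) (x : ℝ) : ℝ≥0∞ :=
  ∑' k : ℕ, ENNReal.ofReal (x ^ k * (A ^ k) w v)

/-- `Z_v(x) := Σ_{w ∈ V} Z_{w,v}(x)`. -/
def Zvert (A : Matrix V V ℝ) (v : V) (x : ℝ) : ℝ≥0∞ := ∑ w : V, Zfun A w v x

/-!
Put `g = h - h'` and argue by well-founded induction along reachability, so that `g` vanishes
at every vertex strictly below `v`. If `g v ≠ 0`, then `g` restricted to the component `C` of `v`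
is an eigenvector of `A_C` for `e^β`, so `ρ(A_C) ≥ e^β`; whichever of `h, h'` is positive at `v`
is positive and subinvariant on `C`, so `ρ(A_C) ≤ e^β` by Collatz–Wielandt. On any other
component `C'` reaching `C` that vector is also positive, and strictly subinvariant where a path
leaves `C'`; as `A_{C'}` is irreducible, `ρ(A_{C'}) < e^β`. Thus `C` is minimal with
`ρ(A_C) = e^β`, so `v ∈ K` and `g v = 0` after all.
-/

open Matrix

section NonnegMatrix

variable {n : Type*} [Fintype n] {B : Matrix n n ℝ}

theorem mulVec_apply_le_mulVec_apply (hB : ∀ i j, 0 ≤ B i j) {x y : n → ℝ}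
    (hxy : ∀ j, x j ≤ y j) (i : n) : (B *ᵥ x) i ≤ (B *ᵥ y) i :=
  Finset.sum_le_sum fun j _ => mul_le_mul_of_nonneg_left (hxy j) (hB i j)

theorem apply_eq_of_mulVec_apply_eq (hB : ∀ i j, 0 ≤ B i j) {x y : n → ℝ}
    (hxy : ∀ j, x j ≤ y j) {i : n} (hi : (B *ᵥ x) i = (B *ᵥ y) i) {k : n} (hik : 0 < B i k) :
    x k = y k := by
  have hsum : ∑ j, B i j * (y j - x j) = 0 := by
    simp only [mul_sub, Finset.sum_sub_distrib]
    exact sub_eq_zero.2 hi.symm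
  rw [Finset.sum_eq_zero_iff_of_nonneg fun j _ =>
    mul_nonneg (hB i j) (sub_nonneg.2 (hxy j))] at hsum
  have := hsum k (Finset.mem_univ k)
  rcases mul_eq_zero.1 this with h | h
  · exact absurd h hik.ne'
  · linarith

variable [DecidableEq n]

theorem reaches_iff_reflTransGen (hB : ∀ i j, 0 ≤ B i j) {i j : n} :
    Reaches B i j ↔ Relation.ReflTransGen (fun a b => 0 < B a b) i j := by
  constructor
  · rintro ⟨k, hk⟩
    induction k generalizing i with
    | zero =>
      obtain rfl : i = j := by by_contra hij; simp [one_apply_ne hij] at hk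
      exact .refl
    | succ m ih =>
      rw [pow_succ', mul_apply, Finset.sum_pos_iff_of_nonneg fun x _ =>
        mul_nonneg (hB i x) (pow_apply_nonneg hB m x j)] at hk
      obtain ⟨x, -, hx⟩ := hk
      exact .head (pos_of_mul_pos_left hx (pow_apply_nonneg hB m x j))
        (ih (pos_of_mul_pos_right hx (hB i x)))
  · intro h
    induction h using Relation.ReflTransGen.head_induction_on with
    | refl => exact ⟨0, by simp⟩
    | head hix _ ih =>
      obtain ⟨m, hm⟩ := ih
      refine ⟨m + 1, lt_of_lt_of_le (mul_pos hix hm) ?_⟩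
      rw [pow_succ', mul_apply]
      exact Finset.single_le_sum (f := fun y => B _ y * (B ^ m) y j)
        (fun y _ => mul_nonneg (hB _ y) (pow_apply_nonneg hB m y j)) (Finset.mem_univ _)

theorem reaches_refl (B : Matrix n n ℝ) (i : n) : Reaches B i i := ⟨0, by simp⟩

theorem reaches_of_pos {i j : n} (h : 0 < B i j) : Reaches B i j := ⟨1, by simpa using h⟩

theorem Reaches.trans (hB : ∀ i j, 0 ≤ B i j) {i j k : n} (hij : Reaches B i j)
    (hjk : Reaches B j k) : Reaches B i k :=
  (reaches_iff_reflTransGen hB).2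
    (((reaches_iff_reflTransGen hB).1 hij).trans ((reaches_iff_reflTransGen hB).1 hjk))

theorem Reaches.exists_exit (hB : ∀ i j, 0 ≤ B i j) {S : Set n} {a u : n} (h : Reaches B a u)
    (ha : a ∈ S) (hu : u ∉ S) : ∃ e ∈ S, ∃ w ∉ S, 0 < B e w ∧ Reaches B w u := by
  rw [reaches_iff_reflTransGen hB] at h
  induction h using Relation.ReflTransGen.head_induction_on with
  | refl => exact absurd ha hu
  | @head a x hax hxu ih =>
    by_cases hx : x ∈ S
    · exact ih hx
    · exact ⟨a, ha, x, hx, hax, (reaches_iff_reflTransGen hB).2 hxu⟩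

theorem pos_of_reaches_of_mulVec_eq_smul (hB : ∀ i j, 0 ≤ B i j) {f : n → ℝ} {c : ℝ}
    (hf : ∀ i, 0 ≤ f i) (hfc : B *ᵥ f = c • f) {w u : n} (hwu : Reaches B w u) (hu : 0 < f u) :
    0 < f w := by
  rw [reaches_iff_reflTransGen hB] at hwu
  induction hwu using Relation.ReflTransGen.head_induction_on with
  | refl => exact hu
  | @head a x hax _ ih =>
    have hle : B a x * f x ≤ c * f a := by
      have hrow := congrFun hfc a
      rw [Pi.smul_apply, smul_eq_mul] at hrow
      rw [← hrow, mulVec, dotProduct]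
      exact Finset.single_le_sum (f := fun y => B a y * f y)
        (fun y _ => mul_nonneg (hB a y) (hf y)) (Finset.mem_univ x)
    have hpos : 0 < c * f a := (mul_pos hax ih).trans_le hle
    exact (hf a).lt_of_ne fun h => by simp [← h] at hpos

end NonnegMatrix

section Spectrum

variable {n : Type*} [Fintype n] [DecidableEq n]

theorem mem_spectrum_iff_exists_mulVec_eq_smul {K : Type*} [Field K] {M : Matrix n n K} {μ : K} :
    μ ∈ spectrum K M ↔ ∃ v ≠ 0, M *ᵥ v = μ • v := by
  rw [← spectrum_toLin', ← Module.End.hasEigenvalue_iff_mem_spectrum,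
    Module.End.hasEigenvalue_iff, Submodule.ne_bot_iff]
  simp only [Module.End.mem_eigenspace_iff, toLin'_apply]
  grind

theorem finite_specRad_set (B : Matrix n n ℝ) :
    {r : ℝ | ∃ μ ∈ spectrum ℂ (B.map fun t : ℝ => (t : ℂ)), r = ‖μ‖}.Finite :=
  ((finite_spectrum _).image norm).subset fun _ ⟨μ, hμ, hr⟩ => ⟨μ, hμ, hr.symm⟩

theorem le_specRad_of_mulVec_eq_smul {B : Matrix n n ℝ} {g : n → ℝ} {c : ℝ} (hg : g ≠ 0)
    (hgc : B *ᵥ g = c • g) (hc : 0 ≤ c) : c ≤ specRad B := by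
  have hmem : (c : ℂ) ∈ spectrum ℂ (B.map fun t : ℝ => (t : ℂ)) := by
    refine mem_spectrum_iff_exists_mulVec_eq_smul.2 ⟨fun i => (g i : ℂ), ?_, ?_⟩
    · exact fun h => hg (funext fun i => by simpa using congrFun h i)
    · funext i
      have := Complex.ofRealHom.map_mulVec B g i
      rw [hgc] at this
      simp only [Pi.smul_apply, smul_eq_mul] at this ⊢
      rw [map_mul] at this
      exact this.symm
  exact le_csSup (finite_specRad_set B).bddAbove ⟨c, hmem, (Complex.norm_of_nonneg hc).symm⟩

variable {B : Matrix n n ℝ}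

/-- Collatz–Wielandt: `y = |z|` for an eigenvector `z` of `μ`, and `t = max_j y_j / x_j`. -/
theorem exists_collatzWielandt_data (hB : ∀ i j, 0 ≤ B i j) {x : n → ℝ} (hx : ∀ i, 0 < x i)
    {μ : ℂ} (hμ : μ ∈ spectrum ℂ (B.map fun t : ℝ => (t : ℂ))) :
    ∃ (y : n → ℝ) (t : ℝ) (i : n), 0 < t ∧ (∀ j, ‖μ‖ * y j ≤ (B *ᵥ y) j) ∧
      (∀ j, y j ≤ t * x j) ∧ y i = t * x i := by
  obtain ⟨z, hz, hμz⟩ := mem_spectrum_iff_exists_mulVec_eq_smul.1 hμ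
  obtain ⟨j₀, hj₀⟩ := Function.ne_iff.1 hz
  have : Nonempty n := ⟨j₀⟩
  obtain ⟨i, -, hi⟩ := Finset.exists_max_image Finset.univ (fun j => ‖z j‖ / x j)
    Finset.univ_nonempty
  have hle : ∀ j, ‖z j‖ ≤ ‖z i‖ / x i * x j := fun j =>
    (div_le_iff₀ (hx j)).1 (hi j (Finset.mem_univ j))
  refine ⟨fun j => ‖z j‖, ‖z i‖ / x i, i, ?_, fun j => ?_, hle, by field_simp [(hx i).ne']⟩
  · have := (norm_pos_iff.2 hj₀).trans_le (hle j₀)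
    exact pos_of_mul_pos_left this (hx j₀).le
  · calc ‖μ‖ * ‖z j‖ = ‖∑ k, (B j k : ℂ) * z k‖ := by
          rw [← norm_mul, ← smul_eq_mul, ← Pi.smul_apply μ z, ← hμz]; rfl
      _ ≤ ∑ k, ‖(B j k : ℂ) * z k‖ := norm_sum_le _ _
      _ = (B *ᵥ fun k => ‖z k‖) j := by
          simp only [norm_mul, Complex.norm_of_nonneg (hB j _)]; rfl

theorem norm_le_of_mulVec_le (hB : ∀ i j, 0 ≤ B i j) {x : n → ℝ} (hx : ∀ i, 0 < x i) {c : ℝ}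
    (hsub : ∀ i, (B *ᵥ x) i ≤ c * x i) {μ : ℂ}
    (hμ : μ ∈ spectrum ℂ (B.map fun t : ℝ => (t : ℂ))) : ‖μ‖ ≤ c := by
  obtain ⟨y, t, i, ht, hμy, hyx, hyi⟩ := exists_collatzWielandt_data hB hx hμ
  have hti : 0 < t * x i := mul_pos ht (hx i)
  refine le_of_mul_le_mul_right ?_ hti
  calc ‖μ‖ * (t * x i) = ‖μ‖ * y i := by rw [hyi]
    _ ≤ (B *ᵥ y) i := hμy i
    _ ≤ (B *ᵥ (t • x)) i := mulVec_apply_le_mulVec_apply hB hyx i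
    _ = t * (B *ᵥ x) i := by rw [mulVec_smul]; rfl
    _ ≤ t * (c * x i) := mul_le_mul_of_nonneg_left (hsub i) ht.le
    _ = c * (t * x i) := by ring

/-- `c ≤ ‖μ‖` would force `y = t x` to propagate along the edges from `i`, hence up to `e`. -/
theorem norm_lt_of_mulVec_le (hB : ∀ i j, 0 ≤ B i j) (hirr : ∀ i j, Reaches B i j)
    {x : n → ℝ} (hx : ∀ i, 0 < x i) {c : ℝ} (hsub : ∀ i, (B *ᵥ x) i ≤ c * x i) {e : n}
    (he : (B *ᵥ x) e < c * x e) {μ : ℂ} (hμ : μ ∈ spectrum ℂ (B.map fun t : ℝ => (t : ℂ))) :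
    ‖μ‖ < c := by
  obtain ⟨y, t, i, ht, hμy, hyx, hyi⟩ := exists_collatzWielandt_data hB hx hμ
  by_contra! hcμ
  have hyx' : ∀ j, y j ≤ (t • x) j := hyx
  have htight : ∀ j, y j = t * x j →
      (B *ᵥ y) j = (B *ᵥ (t • x)) j ∧ (B *ᵥ x) j = c * x j := by
    intro j hj
    have h1 : c * (t * x j) ≤ (B *ᵥ y) j :=
      (mul_le_mul_of_nonneg_right hcμ (mul_pos ht (hx j)).le).trans (hj ▸ hμy j)
    have h2 := mulVec_apply_le_mulVec_apply hB hyx' j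
    have h3 : (B *ᵥ (t • x)) j = t * (B *ᵥ x) j := by rw [mulVec_smul]; rfl
    have h4 := mul_le_mul_of_nonneg_left (hsub j) ht.le
    constructor
    · nlinarith
    · exact le_antisymm (hsub j) (le_of_mul_le_mul_left (by nlinarith) ht)
  by_cases heS : y e = t * x e
  · exact (htight e heS).2.not_lt he
  · obtain ⟨j, hj, k, hk, hjk, -⟩ := (hirr i e).exists_exit (S := {j | y j = t * x j}) hB hyi heS
    exact hk (apply_eq_of_mulVec_apply_eq hB hyx' (htight j hj).1 hjk)

theorem specRad_le_of_mulVec_le (hB : ∀ i j, 0 ≤ B i j) {x : n → ℝ} (hx : ∀ i, 0 < x i) {c : ℝ}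
    (hc : 0 ≤ c) (hsub : ∀ i, (B *ᵥ x) i ≤ c * x i) : specRad B ≤ c :=
  Real.sSup_le (fun _ ⟨_, hμ, hr⟩ => hr ▸ norm_le_of_mulVec_le hB hx hsub hμ) hc

theorem specRad_lt_of_mulVec_le (hB : ∀ i j, 0 ≤ B i j) (hirr : ∀ i j, Reaches B i j)
    {x : n → ℝ} (hx : ∀ i, 0 < x i) {c : ℝ} (hc : 0 < c) (hsub : ∀ i, (B *ᵥ x) i ≤ c * x i)
    {e : n} (he : (B *ᵥ x) e < c * x e) : specRad B < c := by
  unfold specRad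
  rcases Set.eq_empty_or_nonempty
    {r : ℝ | ∃ μ ∈ spectrum ℂ (B.map fun t : ℝ => (t : ℂ)), r = ‖μ‖} with hempty | hne
  · rwa [hempty, Real.sSup_empty]
  · exact ((finite_specRad_set B).csSup_lt_iff hne).2 fun _ ⟨_, hμ, hr⟩ =>
      hr ▸ norm_lt_of_mulVec_le hB hirr hx hsub he hμ

end Spectrum

section StronglyConnected

variable {A : Matrix V V ℝ}

theorem mem_sccOf_self (A : Matrix V V ℝ) (v : V) : v ∈ sccOf A v :=
  ⟨reaches_refl A v, reaches_refl A v⟩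

theorem sccOf_eq_of_mem (hA : ∀ i j, 0 ≤ A i j) {u v : V} (hu : u ∈ sccOf A v) :
    sccOf A u = sccOf A v := by
  ext w
  exact ⟨fun hw => ⟨hu.1.trans hA hw.1, hw.2.trans hA hu.2⟩,
    fun hw => ⟨hu.2.trans hA hw.1, hw.2.trans hA hu.1⟩⟩

theorem wellFounded_reaches_not_reaches (hA : ∀ i j, 0 ≤ A i j) :
    WellFounded fun w v : V => Reaches A v w ∧ ¬ Reaches A w v := by
  have : IsTrans V fun w v => Reaches A v w ∧ ¬ Reaches A w v :=
    ⟨fun _ _ _ hab hbc => ⟨hbc.1.trans hA hab.1, fun hac => hab.2 (hac.trans hA hbc.1)⟩⟩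
  have : Std.Irrefl fun w v : V => Reaches A v w ∧ ¬ Reaches A w v := ⟨fun _ h => h.2 h.1⟩
  exact Finite.wellFounded_of_trans_of_irrefl _

theorem reaches_subMat_sccOf (hA : ∀ i j, 0 ≤ A i j) {v : V} (i j : sccOf A v) :
    Reaches (subMat A (sccOf A v)) i j := by
  have key : ∀ a, Relation.ReflTransGen (fun a b => 0 < A a b) a j →
      ∀ ha : a ∈ sccOf A v, Reaches (subMat A (sccOf A v)) ⟨a, ha⟩ j := by
    intro a h
    induction h using Relation.ReflTransGen.head_induction_on with
    | refl => exact fun _ => reaches_refl _ _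
    | @head a x hax hxj ih =>
      intro ha
      have hx : x ∈ sccOf A v :=
        ⟨ha.1.trans hA (reaches_of_pos hax), ((reaches_iff_reflTransGen hA).2 hxj).trans hA j.2.2⟩
      exact Reaches.trans (fun _ _ => hA _ _)
        (reaches_of_pos (B := subMat A _) (j := ⟨x, hx⟩) hax) (ih hx)
  exact key i ((reaches_iff_reflTransGen hA).1 (i.2.2.trans hA j.2.1)) i.2

theorem mulVec_apply_eq_subMat_mulVec_add (A : Matrix V V ℝ) (S : Set V) (f : V → ℝ) (i : S) :
    (A *ᵥ f) i = (subMat A S *ᵥ fun j : S => f j) i + ∑ w ∈ S.toFinsetᶜ, A i w * f w := by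
  rw [mulVec, dotProduct, ← Finset.sum_add_sum_compl S.toFinset,
    Finset.sum_subtype S.toFinset (fun _ => Set.mem_toFinset)]
  rfl

theorem subMat_mulVec_le (hA : ∀ i j, 0 ≤ A i j) (S : Set V) {f : V → ℝ} (hf : ∀ w, 0 ≤ f w)
    (i : S) : (subMat A S *ᵥ fun j : S => f j) i ≤ (A *ᵥ f) i := by
  rw [mulVec_apply_eq_subMat_mulVec_add A S]
  exact le_add_of_nonneg_right (Finset.sum_nonneg fun w _ => mul_nonneg (hA _ w) (hf w))

theorem subMat_mulVec_lt (hA : ∀ i j, 0 ≤ A i j) (S : Set V) {f : V → ℝ} (hf : ∀ w, 0 ≤ f w)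
    {i : S} {w : V} (hw : w ∉ S) (hiw : 0 < A i w) (hfw : 0 < f w) :
    (subMat A S *ᵥ fun j : S => f j) i < (A *ᵥ f) i := by
  rw [mulVec_apply_eq_subMat_mulVec_add A S]
  refine lt_add_of_pos_right _ (Finset.sum_pos' (fun w _ => mul_nonneg (hA _ w) (hf w))
    ⟨w, by simpa using hw, mul_pos hiw hfw⟩)

theorem subMat_mulVec_eq (hA : ∀ i j, 0 ≤ A i j) (S : Set V) {f : V → ℝ} {i : S}
    (hf : ∀ w ∉ S, 0 < A i w → f w = 0) :
    (subMat A S *ᵥ fun j : S => f j) i = (A *ᵥ f) i := by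
  rw [mulVec_apply_eq_subMat_mulVec_add A S, left_eq_add]
  refine Finset.sum_eq_zero fun w hw => ?_
  rcases (hA i w).lt_or_eq with hiw | hiw
  · rw [hf w (by simpa using hw) hiw, mul_zero]
  · rw [← hiw, zero_mul]

end StronglyConnected

section Eigenvectors

variable {A : Matrix V V ℝ} {c : ℝ}

theorem specRadSub_sccOf_le (hA : ∀ i j, 0 ≤ A i j) {f : V → ℝ} (hf : ∀ w, 0 ≤ f w)
    (hfc : A *ᵥ f = c • f) (hc : 0 ≤ c) {v : V} (hfv : 0 < f v) :
    specRadSub A (sccOf A v) ≤ c :=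
  specRad_le_of_mulVec_le (fun _ _ => hA _ _)
    (fun i => pos_of_reaches_of_mulVec_eq_smul hA hf hfc i.2.2 hfv) hc
    fun i => (subMat_mulVec_le hA _ hf i).trans_eq (congrFun hfc i)

/-- `f` is positive and subinvariant on the component, strictly so where a path to `u` leaves
it. -/
theorem specRadSub_sccOf_lt (hA : ∀ i j, 0 ≤ A i j) {f : V → ℝ} (hf : ∀ w, 0 ≤ f w)
    (hfc : A *ᵥ f = c • f) (hc : 0 < c) {v u : V} (hvu : Reaches A v u) (hu : u ∉ sccOf A v)
    (hfu : 0 < f u) : specRadSub A (sccOf A v) < c := by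
  obtain ⟨e, he, w, hw, hew, hwu⟩ := hvu.exists_exit hA (mem_sccOf_self A v) hu
  have hfC : ∀ i : sccOf A v, 0 < f i :=
    fun i => pos_of_reaches_of_mulVec_eq_smul hA hf hfc (i.2.2.trans hA hvu) hfu
  exact specRad_lt_of_mulVec_le (fun _ _ => hA _ _) (reaches_subMat_sccOf hA) hfC hc
    (fun i => (subMat_mulVec_le hA _ hf i).trans_eq (congrFun hfc i))
    (e := ⟨e, he⟩) ((subMat_mulVec_lt hA _ hf hw hew
      (pos_of_reaches_of_mulVec_eq_smul hA hf hfc hwu hfu)).trans_eq (congrFun hfc e))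

theorem le_specRadSub_sccOf (hA : ∀ i j, 0 ≤ A i j) {g : V → ℝ} (hgc : A *ᵥ g = c • g)
    (hc : 0 ≤ c) {v : V} (hgv : g v ≠ 0)
    (hbelow : ∀ w, Reaches A v w → ¬ Reaches A w v → g w = 0) :
    c ≤ specRadSub A (sccOf A v) := by
  refine le_specRad_of_mulVec_eq_smul (g := fun i : sccOf A v => g i)
    (fun h => hgv (congrFun h ⟨v, mem_sccOf_self A v⟩)) (funext fun i => ?_) hc
  refine (subMat_mulVec_eq hA _ fun w hw hiw => ?_).trans (congrFun hgc i)
  have hvw : Reaches A v w := i.2.1.trans hA (reaches_of_pos hiw)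
  exact hbelow w hvw fun hwv => hw ⟨hvw, hwv⟩

theorem isMinSCC_sccOf (hA : ∀ i j, 0 ≤ A i j) (hc : 0 < c) {f g : V → ℝ}
    (hf : ∀ w, 0 ≤ f w) (hfc : A *ᵥ f = c • f) (hgc : A *ᵥ g = c • g) {v : V} (hfv : 0 < f v)
    (hgv : g v ≠ 0) (hbelow : ∀ w, Reaches A v w → ¬ Reaches A w v → g w = 0) :
    IsMinSCC A (sccOf A v) ∧ specRadSub A (sccOf A v) = c := by
  have hrad : specRadSub A (sccOf A v) = c :=
    le_antisymm (specRadSub_sccOf_le hA hf hfc hc.le hfv)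
      (le_specRadSub_sccOf hA hgc hc.le hgv hbelow)
  refine ⟨⟨⟨v, rfl⟩, ?_⟩, hrad⟩
  rintro _ ⟨v', rfl⟩ hne ⟨a, ha, u, hu, hau⟩
  rw [hrad]
  refine specRadSub_sccOf_lt hA hf hfc hc ((ha.1.trans hA hau).trans hA hu.2)
    (fun hv => hne (sccOf_eq_of_mem hA hv).symm) hfv

end Eigenvectors

theorem stmt15_general {V : Type*} [Fintype V] [DecidableEq V]
    (A : Matrix V V ℝ) (hA : ∀ i j, 0 ≤ A i j)
    (β : ℝ)
    (K : Set V)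
    (hK : K = {u : V | ∃ C : Set V, IsMinSCC A C ∧ specRadSub A C = Real.exp β ∧ u ∈ C})
    (h h' : V → ℝ) (hpos : ∀ u, 0 ≤ h u) (hpos' : ∀ u, 0 ≤ h' u)
    (hharm : A.mulVec h = Real.exp β • h) (hharm' : A.mulVec h' = Real.exp β • h')
    (hagree : ∀ u ∈ K, h u = h' u) :
    h = h' := by
  have hgc : A *ᵥ (h - h') = Real.exp β • (h - h') := by
    rw [mulVec_sub, hharm, hharm', smul_sub]
  suffices hg : ∀ v, (h - h') v = 0 from funext fun v => sub_eq_zero.1 (hg v)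
  intro v
  induction v using (wellFounded_reaches_not_reaches hA).induction with
  | _ v ih =>
  by_contra hgv
  obtain ⟨f, hf, hfc, hfv⟩ : ∃ f : V → ℝ, (∀ u, 0 ≤ f u) ∧ A *ᵥ f = Real.exp β • f ∧ 0 < f v := by
    rcases (hpos v).lt_or_eq with hv | hv
    · exact ⟨h, hpos, hharm, hv⟩
    · refine ⟨h', hpos', hharm', (hpos' v).lt_of_ne fun hv' => hgv ?_⟩
      simp [← hv, ← hv']
  obtain ⟨hmin, hrad⟩ := isMinSCC_sccOf hA (Real.exp_pos β) hf hfc hgc hfv hgv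
    fun w hvw hwv => ih w ⟨hvw, hwv⟩
  exact hgv (sub_eq_zero.2 (hagree v (hK ▸ ⟨_, hmin, hrad, mem_sccOf_self A v⟩)))

/-- `K` is the union of all minimal strongly connected components `C` with
`ρ(A_C) = e^β`; two nonnegative vectors `h, h'` with `A h = e^β h`, `A h' = e^β h'` that agree
on `K` are equal. -/
theorem stmt15 {V : Type*} [Fintype V] [DecidableEq V] [Nonempty V]
    (A : Matrix V V ℝ) (hA : ∀ i j, 0 ≤ A i j)
    (β : ℝ) (hβ : 0 < β)
    (K : Set V)
    (hK : K = {u : V | ∃ C : Set V, IsMinSCC A C ∧ specRadSub A C = Real.exp β ∧ u ∈ C})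
    (h h' : V → ℝ) (hpos : ∀ u, 0 ≤ h u) (hpos' : ∀ u, 0 ≤ h' u)
    (hharm : A.mulVec h = Real.exp β • h) (hharm' : A.mulVec h' = Real.exp β • h')
    (hagree : ∀ u ∈ K, h u = h' u) :
    h = h' :=
  stmt15_general A hA β K hK h h' hpos hpos' hharm hharm' hagree
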